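/- arXiv:math/0605022 — 2 statements merged into one kernel-verified Lean document; each statement's English description precedes it below -/
import Mathlib

section
/- Let (λ_j)_{j∈J} be a family of infinite regular cardinals, let μ = cf ∏_{j∈J} λ_j, and let F be a filter (on some set I) which is λ_j-decomposable for every j ∈ J. Then F is μ'-decomposable for some cardinal μ' with sup_{j∈J} λ_j ≤ μ' ≤ μ. -/
open Cardinal

universe u v

/-- A `c`-decomposition for a filter `F` on `I` is a function `f : I → c`
(where `c` is identified with a type of cardinality `c`) such that for every
`X ⊆ c` with `|X| < c`, the set `{i ∈ I : f i ∈ X}` does not belong to `F`.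
`F` is `c`-decomposable iff there exists a `c`-decomposition for it. -/
def Filter.IsDecomposable {I : Type u} (F : Filter I) (c : Cardinal.{u}) : Prop :=
  ∃ f : I → c.ord.ToType, ∀ X : Set c.ord.ToType, #X < c → {i | f i ∈ X} ∉ F

/-- The cofinality of the product `∏_j λ_j` of a family of cardinals:
the least cardinality of a set `G ⊆ ∏_j λ_j` such that every `f ∈ ∏_j λ_j`
is pointwise dominated by some `g ∈ G`. -/
noncomputable def prodCof {J : Type v} (lam : J → Cardinal.{u}) : Cardinal.{max u v} :=
  sInf { c | ∃ G : Set (∀ j, (lam j).ord.ToType), #G = c ∧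
    ∀ f : (∀ j, (lam j).ord.ToType), ∃ g ∈ G, ∀ j, f j ≤ g j }

/-- Proposition 1: if `F` is `λ_j`-decomposable for every `j`, then `F` is
`μ'`-decomposable for some `μ'` with `sup_j λ_j ≤ μ' ≤ cf ∏_j λ_j`. -/
theorem prop_prod {I J : Type u} (F : Filter I) [F.NeBot]
    (lam : J → Cardinal.{u}) (hreg : ∀ j, (lam j).IsRegular)
    (hdec : ∀ j, F.IsDecomposable (lam j)) :
    ∃ mu' : Cardinal.{u}, (⨆ j, lam j) ≤ mu' ∧ mu' ≤ prodCof lam ∧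
      F.IsDecomposable mu' := by
  classical
  choose f hf using hdec
  set h : I → ∀ j, (lam j).ord.ToType := fun i j => f j i with hh
  set S : Set Cardinal.{u} :=
    {c | ∃ G : Set (∀ j, (lam j).ord.ToType), #G = c ∧
      {i | ∃ g ∈ G, ∀ j, h i j ≤ g j} ∈ F} with hS
  -- the set defining prodCof is nonempty
  have hTne : { c | ∃ G : Set (∀ j, (lam j).ord.ToType), #G = c ∧
      ∀ f : (∀ j, (lam j).ord.ToType), ∃ g ∈ G, ∀ j, f j ≤ g j }.Nonempty :=
    ⟨#(∀ j, (lam j).ord.ToType), Set.univ, mk_univ,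
      fun f => ⟨f, Set.mem_univ f, fun j => le_rfl⟩⟩
  obtain ⟨G₁, hG₁card, hG₁dom⟩ := csInf_mem hTne
  -- S is nonempty, containing prodCof lam
  have hprodS : prodCof lam ∈ S := by
    refine ⟨G₁, hG₁card, Filter.univ_mem' fun i => ?_⟩
    obtain ⟨g, hg, hle⟩ := hG₁dom (h i)
    exact ⟨g, hg, hle⟩
  obtain ⟨G₀, hG₀card, hG₀dom⟩ := csInf_mem ⟨_, hprodS⟩
  set mu' : Cardinal.{u} := sInf S with hmu'
  refine ⟨mu', ?_, csInf_le' hprodS, ?_⟩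
  · -- lower bound
    refine ciSup_le' fun j => ?_
    by_contra hlt
    push_neg at hlt
    set Xj : Set (lam j).ord.ToType := ⋃ g : G₀, Set.Iic (g.1 j) with hXj
    have hXjlt : #Xj < lam j := by
      refine lt_of_le_of_lt (mk_iUnion_le _) ?_
      refine Cardinal.mul_lt_of_lt (hreg j).aleph0_le (hG₀card ▸ hlt) ?_
      refine Cardinal.iSup_lt_of_isRegular (hreg j) (hG₀card ▸ hlt) fun g => ?_
      have h1 : Set.Iic (g.1 j) = Set.Iio (g.1 j) ∪ {g.1 j} := by
        rw [Set.Iio_union_right]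
      rw [h1]
      refine lt_of_le_of_lt (mk_union_le _ _) ?_
      refine Cardinal.add_lt_of_lt (hreg j).aleph0_le (mk_Iio_ord_toType _) ?_
      simpa using (one_lt_aleph0.trans_le (hreg j).aleph0_le)
    refine hf j Xj hXjlt (Filter.mem_of_superset hG₀dom fun i hi => ?_)
    obtain ⟨g, hg, hle⟩ := hi
    exact Set.mem_iUnion.2 ⟨⟨g, hg⟩, hle j⟩
  · -- decomposability
    have hmune : mu' ≠ 0 := by
      intro h0
      rw [h0] at hG₀card
      rw [Cardinal.mk_eq_zero_iff, Set.isEmpty_coe_sort] at hG₀card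
      subst hG₀card
      refine F.empty_notMem ?_
      convert hG₀dom using 1
      ext i
      simp
    have hne : Nonempty mu'.ord.ToType := by
      rw [← Cardinal.mk_ne_zero_iff, mk_ord_toType]
      exact hmune
    have he : Nonempty (↥G₀ ≃ mu'.ord.ToType) :=
      Cardinal.eq.mp (by rw [hG₀card, mk_ord_toType])
    obtain ⟨e⟩ := he
    refine ⟨fun i => if hx : ∃ g ∈ G₀, ∀ j, h i j ≤ g j
        then e ⟨hx.choose, hx.choose_spec.1⟩ else Classical.arbitrary _, ?_⟩
    intro X hX hA
    set G' : Set (∀ j, (lam j).ord.ToType) := Subtype.val '' (e ⁻¹' X) with hG'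
    have hG'lt : #G' < mu' := by
      refine lt_of_le_of_lt (Cardinal.mk_image_le) ?_
      exact lt_of_le_of_lt (Cardinal.mk_preimage_of_injective _ _ e.injective) hX
    have hG'S : #G' ∈ S := by
      refine ⟨G', rfl, Filter.mem_of_superset (Filter.inter_mem hA hG₀dom) ?_⟩
      rintro i ⟨hiX, hiD⟩
      have hd : (if hx : ∃ g ∈ G₀, ∀ j, h i j ≤ g j
          then e ⟨hx.choose, hx.choose_spec.1⟩ else Classical.arbitrary _) ∈ X := hiX
      simp only [Set.mem_setOf_eq] at hiD
      rw [dif_pos hiD] at hd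
      exact ⟨hiD.choose, ⟨⟨hiD.choose, hiD.choose_spec.1⟩, hd, rfl⟩,
        hiD.choose_spec.2⟩
    exact absurd (csInf_le' hG'S) (not_le.2 hG'lt)
end

section
/- Let λ be a singular cardinal and let 𝔟 be a set of regular cardinals below λ which is unbounded in λ and satisfies cf ∏_{κ∈𝔟} κ = λ⁺. If F is a filter which is κ-decomposable for every κ ∈ 𝔟, then F is either λ-decomposable or λ⁺-decomposable. -/
open Cardinal

universe u v

/-- If `λ` is singular, `𝔟` is a set of regular cardinals below `λ` which is
unbounded in `λ` and satisfies `cf ∏_{κ ∈ 𝔟} κ = λ⁺`, and the filter `F` is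
`κ`-decomposable for every `κ ∈ 𝔟`, then `F` is either `λ`-decomposable or
`λ⁺`-decomposable. -/
theorem decomposable_of_prodCof_eq_succ {I : Type u} (lam : Cardinal.{u})
    (hinf : ℵ₀ ≤ lam) (hsing : lam.ord.cof < lam)
    (b : Set Cardinal.{u})
    (hreg : ∀ κ ∈ b, κ.IsRegular) (hlt : ∀ κ ∈ b, κ < lam)
    (hunb : ∀ a < lam, ∃ κ ∈ b, a < κ)
    (hcof : prodCof (fun κ : b => (κ : Cardinal.{u}))
      = Cardinal.lift.{u + 1} (Order.succ lam))
    (F : Filter I) [F.NeBot] (hdec : ∀ κ ∈ b, F.IsDecomposable κ) :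
    F.IsDecomposable lam ∨ F.IsDecomposable (Order.succ lam) := by
  classical
  -- decompositions
  have hfdec : ∀ κ : b, ∃ f : I → ((κ : Cardinal.{u})).ord.ToType,
      ∀ X : Set ((κ : Cardinal.{u})).ord.ToType, #X < (κ : Cardinal.{u}) →
        {i | f i ∈ X} ∉ F := fun κ => hdec κ κ.2
  set fdec : ∀ κ : b, I → ((κ : Cardinal.{u})).ord.ToType :=
    fun κ => (hfdec κ).choose with hfdecdef
  have hfd : ∀ (κ : b) (X : Set ((κ : Cardinal.{u})).ord.ToType),
      Cardinal.mk X < (κ : Cardinal.{u}) → {i | fdec κ i ∈ X} ∉ F := fun κ => (hfdec κ).choose_spec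
  -- dominating family
  have hne : Set.Nonempty { c : Cardinal.{u+1} |
      ∃ G : Set (∀ j : b, ((j : Cardinal.{u})).ord.ToType), #G = c ∧
        ∀ f : (∀ j : b, ((j : Cardinal.{u})).ord.ToType), ∃ g ∈ G, ∀ j, f j ≤ g j } := by
    refine ⟨#(Set.univ : Set (∀ j : b, ((j : Cardinal.{u})).ord.ToType)),
      Set.univ, rfl, fun f => ⟨f, trivial, fun j => le_rfl⟩⟩
  have hS : ∃ G : Set (∀ j : b, ((j : Cardinal.{u})).ord.ToType),
      Cardinal.mk G = Cardinal.lift.{u + 1} (Order.succ lam) ∧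
      ∀ f : (∀ j : b, ((j : Cardinal.{u})).ord.ToType), ∃ g ∈ G, ∀ j, f j ≤ g j := by
    have h2 : prodCof (fun κ : b => (κ : Cardinal.{u})) ∈ { c : Cardinal.{u+1} |
      ∃ G : Set (∀ j : b, ((j : Cardinal.{u})).ord.ToType), #G = c ∧
        ∀ f : (∀ j : b, ((j : Cardinal.{u})).ord.ToType), ∃ g ∈ G, ∀ j, f j ≤ g j } :=
      csInf_mem hne
    rwa [hcof] at h2
  obtain ⟨G, hGcard, hGdom⟩ := hS
  -- bijection with (succ lam).ord.ToType
  have hcard : Cardinal.lift.{u} #↥G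
      = Cardinal.lift.{u + 1} #((Order.succ lam).ord.ToType) := by
    rw [hGcard, mk_ord_toType, Cardinal.lift_lift]
  obtain ⟨e⟩ : Nonempty (↥G ≃ (Order.succ lam).ord.ToType) := Cardinal.lift_mk_eq'.mp hcard
  -- the pointwise function and its dominator
  set h : I → ∀ j : b, ((j : Cardinal.{u})).ord.ToType := fun i κ => fdec κ i with hdef
  have hr : ∀ i : I, ∃ g : ↥G, ∀ κ : b, h i κ ≤ (g : ∀ j : b, ((j : Cardinal.{u})).ord.ToType) κ := by
    intro i
    obtain ⟨g, hg, hle⟩ := hGdom (h i)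
    exact ⟨⟨g, hg⟩, hle⟩
  set r : I → ↥G := fun i => (hr i).choose with hrdef
  have hrle : ∀ (i : I) (κ : b),
      h i κ ≤ (r i : ∀ j : b, ((j : Cardinal.{u})).ord.ToType) κ := fun i => (hr i).choose_spec
  set ρ : I → (Order.succ lam).ord.ToType := fun i => e (r i) with hρdef
  -- key lemma
  have key : ∀ X' : Set ((Order.succ lam).ord.ToType), #X' < lam → {i | ρ i ∈ X'} ∉ F := by
    intro X' hX' hmemF
    obtain ⟨κ, hκb, hκ⟩ := hunb #X' hX'
    have hregκ := hreg κ hκb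
    set κ' : b := ⟨κ, hκb⟩
    set v : X' → ((κ' : Cardinal.{u})).ord.ToType :=
      fun x => ((e.symm x.1 : ↥G) : ∀ j : b, ((j : Cardinal.{u})).ord.ToType) κ' with hvdef
    haveI : IsWellOrder ((κ' : Cardinal.{u})).ord.ToType (· < ·) := isWellOrder_lt
    have hbd : Set.Bounded (· < ·) (Set.range v) := by
      have h2 : #(Set.range v) < Ordinal.cof (Ordinal.type
          ((· < ·) : ((κ' : Cardinal.{u})).ord.ToType → _ → Prop)) := by
        rw [Ordinal.type_toType, hregκ.cof_eq]
        exact Cardinal.mk_range_le.trans_lt hκ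
      exact not_isCofinal_iff.mp fun hc => (Order.cof_le hc).not_gt (by rwa [Ordinal.cof_type] at h2)
    obtain ⟨z, hz⟩ := hbd
    have hW : #(Set.Iio z) < (κ' : Cardinal.{u}) := by
      have h1 : #(Set.Iio z)
          = (@Ordinal.typein ((κ' : Cardinal.{u})).ord.ToType (· < ·) isWellOrder_lt z).card :=
        @Ordinal.card_typein _ _ isWellOrder_lt z
      rw [h1, ← Cardinal.lt_ord]
      exact Ordinal.typein_lt_self z
    have hsub : {i | ρ i ∈ X'} ⊆ {i | fdec κ' i ∈ Set.Iio z} := by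
      intro i hi
      have hx : ρ i ∈ X' := hi
      have hv : v ⟨ρ i, hx⟩ = (r i : ∀ j : b, ((j : Cardinal.{u})).ord.ToType) κ' := by
        simp only [hvdef, hρdef, Equiv.symm_apply_apply]
      have hle : fdec κ' i ≤ v ⟨ρ i, hx⟩ := by
        rw [hv]; exact hrle i κ'
      exact lt_of_le_of_lt hle (hz _ (Set.mem_range_self _))
    exact hfd κ' _ hW (F.mem_of_superset hmemF hsub)
  -- dichotomy
  by_cases hρ : ∀ X : Set ((Order.succ lam).ord.ToType), #X < Order.succ lam →
      {i | ρ i ∈ X} ∉ F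
  · exact Or.inr ⟨ρ, hρ⟩
  · left
    push_neg at hρ
    obtain ⟨X, hXlt, hXF⟩ := hρ
    have hXeq : #X = lam :=
      le_antisymm (Order.lt_succ_iff.mp hXlt) (le_of_not_gt fun h => key X h hXF)
    obtain ⟨q⟩ : Nonempty (↥X ≃ lam.ord.ToType) := Cardinal.eq.mp (by rw [hXeq, mk_ord_toType])
    have hnel : Nonempty lam.ord.ToType := by
      rw [Ordinal.toType_nonempty_iff_ne_zero]
      rw [ne_eq, Cardinal.ord_eq_zero]
      intro h0
      rw [h0] at hinf
      exact Cardinal.aleph0_ne_zero (le_zero_iff.mp hinf)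
    set s : I → lam.ord.ToType :=
      fun i => if hx : ρ i ∈ X then q ⟨ρ i, hx⟩ else hnel.some with hsdef
    refine ⟨s, ?_⟩
    intro W hW hWF
    set X' : Set ((Order.succ lam).ord.ToType) := {x | ∃ hx : x ∈ X, q ⟨x, hx⟩ ∈ W} with hX'def
    have hX'lt : #X' < lam := by
      have hinj : #X' ≤ #W := by
        apply Cardinal.mk_le_of_injective
          (f := fun x : X' => (⟨q ⟨x.1, x.2.choose⟩, x.2.choose_spec⟩ : ↥W))
        intro x y hxy
        have h1 : q ⟨x.1, x.2.choose⟩ = q ⟨y.1, y.2.choose⟩ := congrArg Subtype.val hxy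
        have h2 : (⟨x.1, x.2.choose⟩ : ↥X) = ⟨y.1, y.2.choose⟩ := q.injective h1
        have h3 : (x : (Order.succ lam).ord.ToType) = y := Subtype.mk_eq_mk.mp h2
        exact Subtype.ext h3
      exact hinj.trans_lt hW
    apply key X' hX'lt
    have hsub : {i | s i ∈ W} ∩ {i | ρ i ∈ X} ⊆ {i | ρ i ∈ X'} := by
      rintro i ⟨hiW, hiX⟩
      have hiX' : ρ i ∈ X := hiX
      refine ⟨hiX', ?_⟩
      have hiW' : s i ∈ W := hiW
      have hs2 : s i = q ⟨ρ i, hiX'⟩ := dif_pos hiX'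
      rwa [hs2] at hiW'
    exact F.mem_of_superset (Filter.inter_mem hWF hXF) hsub
end
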